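/- Let λ₁ > 0, λ₂ > 0, α > 0 and θ ∈ [-1, 1], let D = λ₂α/(λ₁+λ₂α) + θλ₁·(2/(2λ₁+λ₂α) + 1/(λ₁+2λ₂α) - 2/(λ₁+λ₂α)), K = λ₁/D, and set p₁ = K/λ₁, p₂ = -K(1+θ)/(λ₁+λ₂α), p₃ = 2Kθ/(2λ₁+λ₂α), p₄ = Kθ/(λ₁+2λ₂α), p₅ = -Kθ/(λ₁+λ₂α). Then for every natural number n ≥ 1, ∫₀^∞ xⁿ · K e^{-λ₁x}(1 - e^{-λ₂αx})(1 - θe^{-λ₂αx}(1 - 2e^{-λ₁x})) dx = n!·[p₁/λ₁ⁿ + p₂/(λ₁+λ₂α)ⁿ + p₃/(2λ₁+λ₂α)ⁿ + p₄/(λ₁+2λ₂α)ⁿ + p₅/(2ⁿ(λ₁+λ₂α)ⁿ)]. -/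

import Mathlib

/-!
Expanding the product, the density is a linear combination of five exponentials
`e^{-b x}` with rates `λ₁, λ₁ + λ₂α, 2λ₁ + λ₂α, λ₁ + 2λ₂α, 2(λ₁ + λ₂α)`, and the Gamma integral
`∫₀^∞ xⁿ e^{-b x} dx = n! / bⁿ⁺¹` evaluates each term; the `pᵢ` absorb one factor of the rate.
-/

open MeasureTheory Real Finset
open scoped Nat

theorem integrableOn_pow_mul_exp_neg_mul_Ioi (n : ℕ) {b : ℝ} (hb : 0 < b) :
    IntegrableOn (fun x : ℝ ↦ x ^ n * exp (-b * x)) (Set.Ioi 0) := by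
  simpa [rpow_natCast] using integrableOn_rpow_mul_exp_neg_mul_rpow (s := n) (p := 1)
    (neg_one_lt_zero.trans_le n.cast_nonneg) one_pos hb

theorem integral_pow_mul_exp_neg_mul_Ioi (n : ℕ) {b : ℝ} (hb : 0 < b) :
    ∫ x in Set.Ioi (0 : ℝ), x ^ n * exp (-b * x) = n ! / b ^ (n + 1) := by
  have h := integral_rpow_mul_exp_neg_mul_Ioi (a := n + 1) (by positivity) hb
  rw [add_sub_cancel_right, Gamma_nat_eq_factorial] at h
  simp only [rpow_natCast, ← neg_mul] at h
  rw [h, ← Nat.cast_add_one, rpow_natCast, one_div, inv_pow, inv_mul_eq_div]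

theorem integral_pow_mul_sum_exp_neg_mul_Ioi {ι : Type*} (s : Finset ι) (c b : ι → ℝ)
    (hb : ∀ i ∈ s, 0 < b i) (n : ℕ) :
    ∫ x in Set.Ioi (0 : ℝ), x ^ n * ∑ i ∈ s, c i * exp (-b i * x)
      = n ! * ∑ i ∈ s, c i / b i ^ (n + 1) := by
  simp_rw [mul_sum, mul_left_comm _ (c _)]
  rw [integral_finsetSum s fun i hi ↦
    (integrableOn_pow_mul_exp_neg_mul_Ioi n (hb i hi)).const_mul (c i)]
  refine sum_congr rfl fun i hi ↦ ?_
  rw [integral_const_mul, integral_pow_mul_exp_neg_mul_Ioi n (hb i hi)]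
  ring

theorem gwed_density_eq_sum_exp (l₁ c θ K x : ℝ) :
    K * exp (-l₁ * x) * (1 - exp (-c * x)) * (1 - θ * exp (-c * x) * (1 - 2 * exp (-l₁ * x)))
      = ∑ i : Fin 5, ![K, -(K * (1 + θ)), 2 * K * θ, K * θ, -(2 * K * θ)] i
          * exp (-![l₁, l₁ + c, 2 * l₁ + c, l₁ + 2 * c, 2 * (l₁ + c)] i * x) := by
  simp only [Fin.sum_univ_succ, Fin.sum_univ_zero, Matrix.cons_val_zero, Matrix.cons_val_succ]
  simp only [two_mul, neg_add, add_mul, exp_add]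
  ring

theorem gwed_nth_moment
    (l₁ l₂ α θ : ℝ) (hl₁ : 0 < l₁) (hl₂ : 0 < l₂) (hα : 0 < α)
    (K p₁ p₂ p₃ p₄ p₅ : ℝ)
    (hp₁ : p₁ = K / l₁)
    (hp₂ : p₂ = -(K * (1 + θ)) / (l₁ + l₂ * α))
    (hp₃ : p₃ = 2 * K * θ / (2 * l₁ + l₂ * α))
    (hp₄ : p₄ = K * θ / (l₁ + 2 * l₂ * α))
    (hp₅ : p₅ = -(K * θ) / (l₁ + l₂ * α)) :
    ∀ n : ℕ, 1 ≤ n →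
      (∫ x in Set.Ioi (0 : ℝ),
          x ^ n * (K * Real.exp (-l₁ * x) * (1 - Real.exp (-l₂ * α * x))
            * (1 - θ * Real.exp (-l₂ * α * x) * (1 - 2 * Real.exp (-l₁ * x)))))
        = (Nat.factorial n : ℝ)
            * (p₁ / l₁ ^ n + p₂ / (l₁ + l₂ * α) ^ n
              + p₃ / (2 * l₁ + l₂ * α) ^ n + p₄ / (l₁ + 2 * l₂ * α) ^ n
              + p₅ / (2 ^ n * (l₁ + l₂ * α) ^ n)) := by
  intro n _
  have hrates : ∀ i ∈ univ,
      0 < ![l₁, l₁ + l₂ * α, 2 * l₁ + l₂ * α, l₁ + 2 * (l₂ * α), 2 * (l₁ + l₂ * α)] i := by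
    intro i _
    fin_cases i <;> dsimp <;> positivity
  simp_rw [neg_mul l₂ α, gwed_density_eq_sum_exp]
  rw [integral_pow_mul_sum_exp_neg_mul_Ioi _ _ _ hrates]
  simp only [Fin.sum_univ_succ, Fin.sum_univ_zero, Matrix.cons_val_zero, Matrix.cons_val_succ]
  subst hp₁ hp₂ hp₃ hp₄ hp₅
  simp only [mul_pow 2 (l₁ + l₂ * α), pow_succ, ← div_div]
  ring
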